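/- For every ν > 0, all a, γ ∈ ℂ, every smooth function ψ : ℂ → ℂ, and every n ∈ ℕ: ∇_{ν,a}(e^{γz²} ψ)(z) = e^{γz²} (∇_{ν,a+γ} ψ)(z) for all z ∈ ℂ, and consequently ∇_{ν,0}^n(e^{γz²} ψ)(z) = e^{γz²} (∇_{ν,γ}^n ψ)(z) for all z ∈ ℂ. -/

import Mathlib

open MeasureTheory Complex

/-- Wirtinger derivative `∂f = ½(∂f/∂x - i ∂f/∂y)`. -/
noncomputable def wD (f : ℂ → ℂ) (z : ℂ) : ℂ :=
  (1 / 2 : ℂ) * (fderiv ℝ f z 1 - Complex.I * fderiv ℝ f z Complex.I)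

/-- The operator `∇_{ν,a} f = -∂f + (ν conj z - 2 a z) f`. -/
noncomputable def nab (ν : ℝ) (a : ℂ) (f : ℂ → ℂ) (z : ℂ) : ℂ :=
  -wD f z + ((ν : ℂ) * starRingEnd ℂ z - 2 * a * z) * f z

lemma wD_mul (f g : ℂ → ℂ) (z : ℂ) (hf : DifferentiableAt ℝ f z)
    (hg : DifferentiableAt ℝ g z) :
    wD (fun w => f w * g w) z = wD f z * g z + f z * wD g z := by
  simp only [wD, fderiv_fun_mul hf hg, ContinuousLinearMap.add_apply,
    ContinuousLinearMap.smul_apply, smul_eq_mul]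
  ring

lemma wD_of_hasDerivAt {f : ℂ → ℂ} {c z : ℂ} (h : HasDerivAt f c z) :
    wD f z = c := by
  have hf : fderiv ℝ f z = (ContinuousLinearMap.smulRight (1 : ℂ →L[ℂ] ℂ) c).restrictScalars ℝ :=
    (h.hasFDerivAt.restrictScalars ℝ).fderiv
  simp [wD, hf, Complex.I_mul_I]
  ring_nf
  simp [Complex.I_sq]
  ring

lemma hasDerivAt_expsq (γ z : ℂ) :
    HasDerivAt (fun w => Complex.exp (γ * w ^ 2)) (Complex.exp (γ * z ^ 2) * (γ * (2 * z))) z := by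
  have h1 : HasDerivAt (fun w : ℂ => γ * w ^ 2) (γ * (2 * z)) z := by
    simpa using ((hasDerivAt_pow 2 z).const_mul γ)
  exact h1.cexp

lemma contDiff_expsq (γ : ℂ) : ContDiff ℝ (⊤ : ℕ∞) (fun w : ℂ => Complex.exp (γ * w ^ 2)) := by
  have : ContDiff ℂ (⊤ : ℕ∞) (fun w : ℂ => Complex.exp (γ * w ^ 2)) :=
    Complex.contDiff_exp.comp (contDiff_const.mul (contDiff_id.pow 2))
  exact this.restrict_scalars ℝ

lemma contDiff_wD {f : ℂ → ℂ} (hf : ContDiff ℝ (⊤ : ℕ∞) f) : ContDiff ℝ (⊤ : ℕ∞) (wD f) := by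
  unfold wD
  have h1 : ContDiff ℝ (⊤ : ℕ∞) (fun z => fderiv ℝ f z) := hf.fderiv_right (by simp)
  exact contDiff_const.mul ((h1.clm_apply contDiff_const).sub
    (contDiff_const.mul (h1.clm_apply contDiff_const)))

lemma contDiff_conj' : ContDiff ℝ (⊤ : ℕ∞) (fun z : ℂ => starRingEnd ℂ z) :=
  Complex.conjCLE.contDiff

lemma contDiff_nab (ν : ℝ) (b : ℂ) {f : ℂ → ℂ} (hf : ContDiff ℝ (⊤ : ℕ∞) f) :
    ContDiff ℝ (⊤ : ℕ∞) (nab ν b f) := by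
  unfold nab
  exact (contDiff_wD hf).neg.add
    (((contDiff_const.mul contDiff_conj').sub
      (contDiff_const.mul contDiff_id)).mul hf)

lemma nab_exp (ν : ℝ) (a γ : ℂ) (ψ : ℂ → ℂ) (hψ : ContDiff ℝ (⊤ : ℕ∞) ψ) (z : ℂ) :
    nab ν a (fun w => Complex.exp (γ * w ^ 2) * ψ w) z
      = Complex.exp (γ * z ^ 2) * nab ν (a + γ) ψ z := by
  unfold nab
  rw [wD_mul _ _ z ((contDiff_expsq γ).differentiable (by simp) z)
      (hψ.differentiable (by simp) z),
    wD_of_hasDerivAt (hasDerivAt_expsq γ z)]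
  ring

/-- Intertwining of `∇_{ν,a}` with multiplication by `e^{γz²}`:
`∇_{ν,a}(e^{γz²}ψ) = e^{γz²} ∇_{ν,a+γ}ψ` and `∇_{ν,0}^n(e^{γz²}ψ) = e^{γz²} ∇_{ν,γ}^n ψ`. -/
theorem statement17 (ν : ℝ) (hν : 0 < ν) (a γ : ℂ) (ψ : ℂ → ℂ)
    (hψ : ContDiff ℝ (⊤ : ℕ∞) ψ) (n : ℕ) :
    (∀ z : ℂ, nab ν a (fun w => Complex.exp (γ * w ^ 2) * ψ w) z
        = Complex.exp (γ * z ^ 2) * nab ν (a + γ) ψ z) ∧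
    (∀ z : ℂ, (nab ν 0)^[n] (fun w => Complex.exp (γ * w ^ 2) * ψ w) z
        = Complex.exp (γ * z ^ 2) * ((nab ν γ)^[n] ψ z)) := by
  refine ⟨fun z => nab_exp ν a γ ψ hψ z, ?_⟩
  induction n with
  | zero => simp
  | succ n ih =>
    intro z
    have hsm : ContDiff ℝ (⊤ : ℕ∞) ((nab ν γ)^[n] ψ) := by
      clear ih
      induction n with
      | zero => simpa using hψ
      | succ m ihm =>
        rw [Function.iterate_succ_apply']
        exact contDiff_nab ν γ ihm
    have hfun : (nab ν 0)^[n] (fun w => Complex.exp (γ * w ^ 2) * ψ w)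
        = fun w => Complex.exp (γ * w ^ 2) * ((nab ν γ)^[n] ψ w) := funext ih
    rw [Function.iterate_succ_apply', hfun,
      nab_exp ν 0 γ _ hsm z, zero_add, Function.iterate_succ_apply']
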